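/- arXiv:1905.05080 — 2 statements merged into one kernel-verified Lean document; each statement's English description precedes it below -/
import Mathlib

section
/- Let $r \geq 1$ and let $l_1, l_2$ be primes with $m \mid r l_1$ and $m \mid r l_2$. For primes $p_1, p_2$ and a prime $q$ coprime to $r l_1 l_2$, define $$C = \sum_{\beta \bmod r[l_1,l_2]/m} \mathrm{Kl}_2(\bar{p}_1 q \beta; r l_1/m)\,\overline{\mathrm{Kl}_2(\bar{p}_2 q \beta; r l_2/m)},$$ where $\mathrm{Kl}_2(n; c) = c^{-1/2}\sum_{x \in (\mathbb{Z}/c\mathbb{Z})^\times} e((nx + \bar{x})/c)$ and $\bar{p}_i$ is the inverse of $p_i$ modulo $r l_i/m$. If $l_1 \neq l_2$ then $C = 0$. -/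
/-- The normalized Kloosterman sum `Kl₂(n; c) = c^{-1/2} ∑_{x ∈ (ℤ/c)ˣ} e((nx + x̄)/c)`
(with junk value `0` for `c = 0`). -/
noncomputable def Kl2 (n : ℤ) (c : ℕ) : ℂ :=
  if h : c = 0 then 0 else
    haveI : NeZero c := ⟨h⟩
    (Real.sqrt c)⁻¹ * ∑ x : (ZMod c)ˣ,
      Complex.exp (2 * Real.pi * Complex.I *
        (((n * (((x : ZMod c).val : ℕ) : ℤ) +
            ((((x⁻¹ : (ZMod c)ˣ) : ZMod c).val : ℕ) : ℤ) : ℤ) : ℂ) / (c : ℂ)))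

/-!
Since `l₁ ≠ l₂` are primes, `m ∣ r`; with `s = r / m` the moduli are `s l₁` and `s l₂`, and `β`
runs over their common period `s l₁ l₂`. Opening both Kloosterman sums, the sum over `β` becomes,
for each pair of units `x`, `y`, a geometric sum in `e(a x / (s l₁) - b y / (s l₂))` with
`a = p̄₁ q`, which vanishes unless this frequency is an integer. Clearing denominators, an
integral frequency would force `l₁ ∣ a x l₂`, which is impossible: `p̄₁`, `q` and `x` are prime
to `l₁`, and `l₁ ∤ l₂`.
-/

namespace Kloosterman

open Complex Finset

noncomputable def e (t : ℂ) : ℂ := exp (2 * Real.pi * I * t)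

lemma e_add (s t : ℂ) : e (s + t) = e s * e t := by
  rw [e, e, e, mul_add, exp_add]

lemma e_sub (s t : ℂ) : e (s - t) = e s * e (-t) := by
  rw [sub_eq_add_neg, e_add]

lemma e_natCast_mul (β : ℕ) (t : ℂ) : e (β * t) = e t ^ β := by
  rw [e, e, ← exp_nat_mul]
  ring_nf

lemma e_eq_one_iff {t : ℂ} : e t = 1 ↔ ∃ n : ℤ, t = n := by
  have h2pi : 2 * (Real.pi : ℂ) * I ≠ 0 := by simp [Real.pi_ne_zero, I_ne_zero]
  rw [e, exp_eq_one_iff]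
  refine exists_congr fun n => ?_
  rw [mul_comm (n : ℂ), mul_right_inj' h2pi]

lemma conj_e_intCast_div (a : ℤ) (c : ℕ) :
    starRingEnd ℂ (e (a / c)) = e (-(a / c)) := by
  rw [e, e, ← exp_conj]
  simp only [map_mul, map_div₀, conj_I, conj_ofReal, map_intCast, map_natCast, map_ofNat]
  ring_nf

lemma sum_range_e_pow_eq_zero {N : ℕ} {t : ℂ} (hN : ∃ k : ℤ, N * t = k) (ht : ∀ n : ℤ, t ≠ n) :
    ∑ β ∈ range N, e t ^ β = 0 := by
  obtain ⟨k, hk⟩ := hN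
  have h1 : e t ≠ 1 := fun h => by
    obtain ⟨n, hn⟩ := e_eq_one_iff.mp h
    exact ht n hn
  rw [geom_sum_eq h1, ← e_natCast_mul, hk, e_eq_one_iff.mpr ⟨k, rfl⟩, sub_self, zero_div]

lemma Kl2_mul_eq_sum (a : ℤ) (c : ℕ) [NeZero c] (β : ℕ) :
    Kl2 (a * β) c = (Real.sqrt c : ℂ)⁻¹ * ∑ x : (ZMod c)ˣ,
      e ((((x⁻¹ : (ZMod c)ˣ) : ZMod c).val : ℤ) / c) * e ((a * (x : ZMod c).val : ℤ) / c) ^ β := by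
  rw [Kl2, dif_neg (NeZero.ne c), Complex.ofReal_inv]
  congr 1
  refine sum_congr rfl fun x _ => ?_
  rw [← e_natCast_mul, ← e_add]
  congr 1
  push_cast
  ring

lemma Kl2_mul_mul_conj_Kl2_mul (a b : ℤ) (c₁ c₂ : ℕ) [NeZero c₁] [NeZero c₂] (β : ℕ) :
    Kl2 (a * β) c₁ * starRingEnd ℂ (Kl2 (b * β) c₂) =
      (Real.sqrt c₁ : ℂ)⁻¹ * (Real.sqrt c₂ : ℂ)⁻¹ * ∑ x : (ZMod c₁)ˣ, ∑ y : (ZMod c₂)ˣ,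
        e ((((x⁻¹ : (ZMod c₁)ˣ) : ZMod c₁).val : ℤ) / c₁ -
            (((y⁻¹ : (ZMod c₂)ˣ) : ZMod c₂).val : ℤ) / c₂) *
          e ((a * (x : ZMod c₁).val : ℤ) / c₁ - (b * (y : ZMod c₂).val : ℤ) / c₂) ^ β := by
  simp only [Kl2_mul_eq_sum, map_mul, map_inv₀, conj_ofReal, map_sum, map_pow, conj_e_intCast_div]
  rw [mul_mul_mul_comm, sum_mul_sum]
  simp only [e_sub, mul_pow]
  congr 1
  refine sum_congr rfl fun x _ => sum_congr rfl fun y _ => ?_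
  ring

lemma sum_range_Kl2_mul_conj_Kl2_eq_zero {c₁ c₂ N : ℕ} [NeZero c₁] [NeZero c₂]
    (h₁ : c₁ ∣ N) (h₂ : c₂ ∣ N) (a b : ℤ)
    (hfreq : ∀ (x : (ZMod c₁)ˣ) (y : (ZMod c₂)ˣ) (n : ℤ),
      ((a * (x : ZMod c₁).val : ℤ) : ℂ) / c₁ - ((b * (y : ZMod c₂).val : ℤ) : ℂ) / c₂ ≠ n) :
    ∑ β ∈ range N, Kl2 (a * β) c₁ * starRingEnd ℂ (Kl2 (b * β) c₂) = 0 := by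
  simp only [Kl2_mul_mul_conj_Kl2_mul, ← mul_sum]
  rw [sum_comm]
  refine mul_eq_zero_of_right _ (sum_eq_zero fun x _ => ?_)
  rw [sum_comm]
  refine sum_eq_zero fun y _ => ?_
  rw [← mul_sum, sum_range_e_pow_eq_zero _ (hfreq x y), mul_zero]
  obtain ⟨k₁, rfl⟩ := h₁
  obtain ⟨k₂, hk₂⟩ := h₂
  refine ⟨k₁ * (a * (x : ZMod c₁).val) - k₂ * (b * (y : ZMod c₂).val), ?_⟩
  have hc₁ : (c₁ : ℂ) ≠ 0 := NeZero.ne _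
  have hc₂ : (c₂ : ℂ) ≠ 0 := NeZero.ne _
  have hk : (c₁ * k₁ : ℂ) = c₂ * k₂ := by exact_mod_cast hk₂
  push_cast
  field_simp
  linear_combination (-(b * ((y : ZMod c₂).val : ℂ))) * hk

lemma intCast_div_sub_intCast_div_ne_intCast {s l₁ l₂ : ℕ} (hs : s ≠ 0) (hl₁ : l₁.Prime)
    (hl : ¬ l₁ ∣ l₂) {u : ℤ} (hu : ¬ (l₁ : ℤ) ∣ u) (v n : ℤ) :
    (u : ℂ) / (s * l₁ : ℕ) - (v : ℂ) / (s * l₂ : ℕ) ≠ n := by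
  intro h
  have hl₂ : l₂ ≠ 0 := fun h₀ => hl (h₀ ▸ dvd_zero l₁)
  have hsC : (s : ℂ) ≠ 0 := Nat.cast_ne_zero.mpr hs
  have hl₁C : (l₁ : ℂ) ≠ 0 := Nat.cast_ne_zero.mpr hl₁.ne_zero
  have hl₂C : (l₂ : ℂ) ≠ 0 := Nat.cast_ne_zero.mpr hl₂
  have hcleared : u * l₂ = l₁ * (v + n * s * l₂) := by
    have hC : ((u * l₂ : ℤ) : ℂ) = ((l₁ * (v + n * s * l₂) : ℤ) : ℂ) := by
      push_cast at h ⊢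
      field_simp at h
      linear_combination h
    exact_mod_cast hC
  have hp : Prime (l₁ : ℤ) := Nat.prime_iff_prime_int.mp hl₁
  rcases hp.dvd_mul.mp ⟨_, hcleared⟩ with h₁ | h₁
  · exact hu h₁
  · exact hl (Int.natCast_dvd_natCast.mp h₁)

lemma not_dvd_mul_mul_unit_val {c l : ℕ} (hl : l.Prime) (hlc : l ∣ c) {p a : ℤ}
    (hpa : p * a ≡ 1 [ZMOD c]) {q : ℕ} (hq : q.Coprime l) (x : (ZMod c)ˣ) :
    ¬ (l : ℤ) ∣ a * q * (x : ZMod c).val := by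
  have hp : Prime (l : ℤ) := Nat.prime_iff_prime_int.mp hl
  have ha : ¬ (l : ℤ) ∣ a := fun h => hp.not_dvd_one <| by
    have h₁ : (l : ℤ) ∣ 1 - p * a := (Int.natCast_dvd_natCast.mpr hlc).trans hpa.dvd
    simpa using h₁.add (h.mul_left p)
  have hq' : ¬ (l : ℤ) ∣ q := by
    rw [Int.natCast_dvd_natCast]
    exact hl.coprime_iff_not_dvd.mp hq.symm
  have hx : ¬ (l : ℤ) ∣ (x : ZMod c).val := by
    rw [Int.natCast_dvd_natCast]
    exact fun h => hl.coprime_iff_not_dvd.mp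
      ((ZMod.val_coe_unit_coprime x).coprime_dvd_left h) hlc
  simp only [hp.dvd_mul, not_or]
  exact ⟨⟨ha, hq'⟩, hx⟩

end Kloosterman

theorem stmt6_general (q r m l₁ l₂ p₁ : ℕ)
    (hl₁ : l₁.Prime) (hl₂ : l₂.Prime)
    (hr : 1 ≤ r) (hm1 : m ∣ r * l₁) (hm2 : m ∣ r * l₂)
    (hqco : Nat.Coprime q (r * l₁ * l₂))
    (pbar₁ pbar₂ : ℤ)
    (hpbar₁ : (p₁ : ℤ) * pbar₁ ≡ 1 [ZMOD ((r * l₁ / m : ℕ) : ℤ)])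
    (hne : l₁ ≠ l₂) :
    ∑ β ∈ Finset.range (r * Nat.lcm l₁ l₂ / m),
      Kl2 (pbar₁ * (q : ℤ) * (β : ℤ)) (r * l₁ / m) *
        (starRingEnd ℂ) (Kl2 (pbar₂ * (q : ℤ) * (β : ℤ)) (r * l₂ / m)) = 0 := by
  have hco : l₁.Coprime l₂ := (Nat.coprime_primes hl₁ hl₂).mpr hne
  obtain ⟨s, rfl⟩ : m ∣ r := by
    simpa [Nat.gcd_mul_left, hco.gcd_eq_one] using Nat.dvd_gcd hm1 hm2
  have hm : m ≠ 0 := by rintro rfl; simp at hr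
  have hs : s ≠ 0 := by rintro rfl; simp at hr
  have hdiv (k : ℕ) : m * s * k / m = s * k := by
    rw [mul_assoc, Nat.mul_div_cancel_left _ (Nat.pos_of_ne_zero hm)]
  rw [hdiv] at hpbar₁
  rw [hdiv, hdiv, hco.lcm_eq_mul, hdiv]
  have : NeZero (s * l₁) := ⟨mul_ne_zero hs hl₁.ne_zero⟩
  have : NeZero (s * l₂) := ⟨mul_ne_zero hs hl₂.ne_zero⟩
  refine Kloosterman.sum_range_Kl2_mul_conj_Kl2_eq_zero ⟨l₂, by ring⟩ ⟨l₁, by ring⟩ _ _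
    fun x y n => Kloosterman.intCast_div_sub_intCast_div_ne_intCast hs hl₁
      ((Nat.prime_dvd_prime_iff_eq hl₁ hl₂).not.mpr hne) ?_ _ n
  exact Kloosterman.not_dvd_mul_mul_unit_val hl₁ (dvd_mul_left _ _) hpbar₁
    (hqco.coprime_dvd_right (dvd_mul_of_dvd_left (dvd_mul_left _ _) _)) x

/-- For `m ∣ r l₁`, `m ∣ r l₂` and primes `l₁ ≠ l₂`, the correlation sum
`C = ∑_{β mod r[l₁,l₂]/m} Kl₂(p̄₁ q β; r l₁/m) conj(Kl₂(p̄₂ q β; r l₂/m))` vanishes. -/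
theorem stmt6 (q r m l₁ l₂ p₁ p₂ : ℕ)
    (hq : q.Prime) (hl₁ : l₁.Prime) (hl₂ : l₂.Prime) (hp₁ : p₁.Prime) (hp₂ : p₂.Prime)
    (hr : 1 ≤ r) (hm : 0 < m) (hm1 : m ∣ r * l₁) (hm2 : m ∣ r * l₂)
    (hqco : Nat.Coprime q (r * l₁ * l₂))
    (pbar₁ pbar₂ : ℤ)
    (hpbar₁ : (p₁ : ℤ) * pbar₁ ≡ 1 [ZMOD ((r * l₁ / m : ℕ) : ℤ)])
    (hpbar₂ : (p₂ : ℤ) * pbar₂ ≡ 1 [ZMOD ((r * l₂ / m : ℕ) : ℤ)])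
    (hne : l₁ ≠ l₂) :
    ∑ β ∈ Finset.range (r * Nat.lcm l₁ l₂ / m),
      Kl2 (pbar₁ * (q : ℤ) * (β : ℤ)) (r * l₁ / m) *
        (starRingEnd ℂ) (Kl2 (pbar₂ * (q : ℤ) * (β : ℤ)) (r * l₂ / m)) = 0 :=
  stmt6_general q r m l₁ l₂ p₁ hl₁ hl₂ hr hm1 hm2 hqco pbar₁ pbar₂ hpbar₁ hne
end

section
/- Let $P, L, H' \geq 1$ be real numbers and $q$ a prime with $8 \cdot (2P)(2H')(2L) < q$. Let $\mathrm{P}$ be a set of primes in $[P,2P)$ and $\mathrm{L}$ a set of primes in $[L,2L)$ with $\mathrm{P} \cap \mathrm{L} = \emptyset$. For $x \in \mathbb{F}_q$, let $\nu(x)$ denote the number of triples $(p,h,l) \in \mathrm{P} \times (H', 2H'] \times \mathrm{L}$ with $h$ a positive integer coprime to $l$ and $p h \bar{l} \equiv x \pmod q$. Then $\sum_{x \in \mathbb{F}_q} \nu(x)^2 \leq |\mathrm{P}|\,|\mathrm{L}|\, H' \cdot \max_{(p_1,h_1,l_2)} \#\{(p_2,h_2,l_1) : l_1 h_2 p_2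 = l_2 h_1 p_1\} \ll_\varepsilon q^\varepsilon\, P H' L$ for every $\varepsilon > 0$; in particular, the number of solutions to $p_1 h_1 \bar{l}_1 \equiv p_2 h_2 \bar{l}_2 \pmod q$ in such triples equals the number of integer solutions to $l_2 h_1 p_1 = l_1 h_2 p_2$, and for each fixed $(p_1,h_1,l_2)$ the number of $(p_2,h_2,l_1)$ with $l_1 h_2 p_2 = l_2 h_1 p_1$ is at most $d_3(l_2 h_1 p_1)$, the number of factorizations into three parts. -/
/-- The ternary divisor function `d₃(n) = #{(a,b,c) : abc = n}`. -/
def d3 (n : ℕ) : ℕ := ∑ d ∈ n.divisors, (n / d).divisors.card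

/-!
A coincidence `p₁ h₁ l̄₁ = p₂ h₂ l̄₂` in `𝔽_q` is equivalent to `l₂ h₁ p₁ = l₁ h₂ p₂` in `ℕ`,
since both sides are positive and below `q`. Exchanging `l₁` and `l₂` turns such pairs of
triples into pairs of triples with the same product `N = l h p < q`. A triple with given
product is determined by its two prime coordinates, which are prime factors of `N`, so each
fibre has at most `ω(N)² ≤ (2 log q)² ≪_ε q^ε` elements, and there are `≪ P H L` triples.
-/

open Finset

lemma natCast_mul_mul_inv_eq_iff_of_lt {q : ℕ} [Fact q.Prime] {p₁ h₁ l₁ p₂ h₂ l₂ : ℕ}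
    (hN₁ : l₂ * h₁ * p₁ ≠ 0) (hN₂ : l₁ * h₂ * p₂ ≠ 0)
    (hs₁ : l₂ * h₁ * p₁ < q) (hs₂ : l₁ * h₂ * p₂ < q) :
    (p₁ * h₁ : ZMod q) * (l₁ : ZMod q)⁻¹ = (p₂ * h₂ : ZMod q) * (l₂ : ZMod q)⁻¹ ↔
      l₂ * h₁ * p₁ = l₁ * h₂ * p₂ := by
  have hne : ∀ {l h p : ℕ}, l * h * p ≠ 0 → l * h * p < q → (l : ZMod q) ≠ 0 :=
    fun hN hlt hl => hlt.not_ge <| Nat.le_of_dvd (Nat.pos_of_ne_zero hN) <|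
      (((ZMod.natCast_eq_zero_iff _ _).1 hl).mul_right _).mul_right _
  rw [← div_eq_mul_inv, ← div_eq_mul_inv, div_eq_div_iff (hne hN₂ hs₂) (hne hN₁ hs₁),
    ← (CharP.natCast_injOn_Iio (ZMod q) q).eq_iff hs₁ hs₂]
  push_cast
  constructor <;> intro h <;> linear_combination h

lemma card_filter_mul_eq_le_d3 (S : Finset (ℕ × ℕ × ℕ)) {N : ℕ} (hN : N ≠ 0) :
    #(S.filter fun t => N = t.2.2 * t.2.1 * t.1) ≤ d3 N := by
  rw [d3, ← card_sigma]
  refine card_le_card_of_injOn (fun t => ⟨t.2.2, t.2.1⟩) ?_ ?_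
  · rintro ⟨p, h, l⟩ ht
    obtain ⟨-, rfl⟩ := mem_filter.1 ht
    simp only at hN
    have hl : 0 < l := Nat.pos_of_ne_zero (left_ne_zero_of_mul (left_ne_zero_of_mul hN))
    rw [mul_assoc] at hN
    simp only [coe_sigma, Set.mem_sigma_iff, mem_coe, Nat.mem_divisors, mul_assoc,
      Nat.mul_div_cancel_left _ hl]
    exact ⟨⟨dvd_mul_right _ _, hN⟩, dvd_mul_right _ _, right_ne_zero_of_mul hN⟩
  · rintro ⟨p, h, l⟩ ht ⟨p', h', l'⟩ ht' heq
    obtain ⟨-, rfl⟩ := mem_filter.1 ht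
    obtain ⟨-, he⟩ := mem_filter.1 ht'
    obtain ⟨rfl, hh⟩ := Sigma.mk.inj_iff.1 heq
    obtain rfl := eq_of_heq hh
    simp only at hN he
    rw [Nat.eq_of_mul_eq_mul_left (Nat.pos_of_ne_zero (left_ne_zero_of_mul hN)) he]

lemma card_filter_mul_eq_le_card_primeFactors_sq (S : Finset (ℕ × ℕ × ℕ))
    (hS : ∀ t ∈ S, t.1.Prime ∧ t.2.2.Prime) {N : ℕ} (hN : N ≠ 0) :
    #(S.filter fun t => N = t.2.2 * t.2.1 * t.1) ≤ #N.primeFactors ^ 2 := by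
  rw [sq, ← card_product]
  refine card_le_card_of_injOn (fun t => (t.1, t.2.2)) ?_ ?_
  · rintro ⟨p, h, l⟩ ht
    obtain ⟨hS', rfl⟩ := mem_filter.1 ht
    obtain ⟨hp, hl⟩ := hS _ hS'
    simp only [coe_product, Set.mem_prod, mem_coe, Nat.mem_primeFactors]
    exact ⟨⟨hp, dvd_mul_left _ _, hN⟩, hl, dvd_mul_of_dvd_left (dvd_mul_right _ _) _, hN⟩
  · rintro ⟨p, h, l⟩ ht ⟨p', h', l'⟩ ht' heq
    obtain ⟨-, rfl⟩ := mem_filter.1 ht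
    obtain ⟨-, he⟩ := mem_filter.1 ht'
    obtain ⟨rfl, rfl⟩ := Prod.ext_iff.1 heq
    simp only at hN he
    have hl : 0 < l := Nat.pos_of_ne_zero (left_ne_zero_of_mul (left_ne_zero_of_mul hN))
    have hp : 0 < p := Nat.pos_of_ne_zero (right_ne_zero_of_mul hN)
    rw [Nat.eq_of_mul_eq_mul_left hl (Nat.eq_of_mul_eq_mul_right hp he)]

lemma card_primeFactors_le_two_mul_log (n : ℕ) : (#n.primeFactors : ℝ) ≤ 2 * Real.log n := by
  rcases eq_or_ne n 0 with rfl | hn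
  · simp
  have hpow : 2 ^ #n.primeFactors ≤ n :=
    (pow_card_le_prod _ _ _ fun p hp => (Nat.prime_of_mem_primeFactors hp).two_le).trans
      (Nat.le_of_dvd (Nat.pos_of_ne_zero hn) (Nat.prod_primeFactors_dvd n))
  have hlog : #n.primeFactors * Real.log 2 ≤ Real.log n := by
    rw [← Real.log_pow]
    exact Real.log_le_log (by positivity) (by exact_mod_cast hpow)
  nlinarith [Real.log_two_gt_d9, (#n.primeFactors).cast_nonneg (α := ℝ)]

lemma log_sq_le_four_div_sq_mul_rpow {x ε : ℝ} (hx : 1 ≤ x) (hε : 0 < ε) :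
    Real.log x ^ 2 ≤ 4 / ε ^ 2 * x ^ ε := by
  calc Real.log x ^ 2 ≤ (x ^ (ε / 2) / (ε / 2)) ^ 2 :=
        pow_le_pow_left₀ (Real.log_nonneg hx) (Real.log_le_rpow_div (by linarith) (half_pos hε)) 2
    _ = 4 / ε ^ 2 * x ^ ε := by
        rw [div_pow, ← Real.rpow_mul_natCast (by linarith)]
        field_simp
        norm_num

lemma card_lt_add_one_of_forall_lt (s : Finset ℕ) {X : ℝ} (hX : 0 ≤ X)
    (hs : ∀ n ∈ s, (n : ℝ) < X) : (#s : ℝ) < X + 1 :=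
  calc (#s : ℝ) ≤ #(range ⌈X⌉₊) := by
        exact_mod_cast card_le_card fun n hn => mem_range.2 (Nat.lt_ceil.2 (hs n hn))
    _ < X + 1 := by simpa using Nat.ceil_lt_add_one hX

lemma sum_sq_card_filter_eq_card_filter_prod {α β : Type*} [Fintype β] [DecidableEq β]
    (T : Finset α) (f : α → β) :
    ∑ x, #(T.filter fun t => f t = x) ^ 2 = #((T ×ˢ T).filter fun tt => f tt.1 = f tt.2) := by
  rw [card_eq_sum_card_fiberwise (f := fun tt => f tt.1) (t := univ) fun _ _ => mem_univ _]
  refine sum_congr rfl fun x _ => ?_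
  rw [sq, ← card_product, filter_filter]
  congr 1
  ext ⟨a, b⟩
  simp only [mem_product, mem_filter]
  constructor
  · rintro ⟨⟨ha, rfl⟩, hb, hfb⟩
    exact ⟨⟨ha, hb⟩, hfb.symm, rfl⟩
  · rintro ⟨⟨ha, hb⟩, hab, rfl⟩
    exact ⟨⟨ha, rfl⟩, hb, hab.symm⟩

lemma card_filter_swap_thirds {α β γ δ : Type*} [DecidableEq δ] (A : Finset α) (B : Finset β)
    (C : Finset γ) (g : α × β × γ → δ) :
    #(((A ×ˢ B ×ˢ C) ×ˢ (A ×ˢ B ×ˢ C)).filter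
        fun tt => g (tt.1.1, tt.1.2.1, tt.2.2.2) = g (tt.2.1, tt.2.2.1, tt.1.2.2)) =
      #(((A ×ˢ B ×ˢ C) ×ˢ (A ×ˢ B ×ˢ C)).filter fun tt => g tt.1 = g tt.2) := by
  let swap : (α × β × γ) × (α × β × γ) → (α × β × γ) × (α × β × γ) :=
    fun tt => ((tt.1.1, tt.1.2.1, tt.2.2.2), (tt.2.1, tt.2.2.1, tt.1.2.2))
  refine card_nbij' swap swap ?_ ?_ (fun _ _ => rfl) (fun _ _ => rfl) <;>
  · rintro ⟨⟨a, b, c⟩, a', b', c'⟩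
    simp only [swap, coe_filter, Set.mem_ofPred_eq, mem_product]
    tauto

lemma card_filter_prod_eq_le_card_mul {α γ : Type*} [DecidableEq γ] (S : Finset α) (g : α → γ)
    {M : ℝ} (hM : ∀ u ∈ S, (#(S.filter fun v => g u = g v) : ℝ) ≤ M) :
    (#((S ×ˢ S).filter fun uv => g uv.1 = g uv.2) : ℝ) ≤ #S * M :=
  calc (#((S ×ˢ S).filter fun uv => g uv.1 = g uv.2) : ℝ)
        = ∑ u ∈ S, (#(S.filter fun v => g u = g v) : ℝ) := by
          simp only [card_filter, sum_product, Nat.cast_sum]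
    _ ≤ ∑ _u ∈ S, M := sum_le_sum hM
    _ = #S * M := by rw [sum_const, nsmul_eq_mul]

lemma sum_sq_card_filter_mul_mul_inv_eq_le {q : ℕ} [Fact q.Prime] {SP SH SL : Finset ℕ}
    (hSP : ∀ p ∈ SP, p.Prime) (hSH : ∀ h ∈ SH, 0 < h) (hSL : ∀ l ∈ SL, l.Prime)
    (hsize : ∀ p ∈ SP, ∀ h ∈ SH, ∀ l ∈ SL, l * h * p < q)
    {T : Finset (ℕ × ℕ × ℕ)} (hT : T ⊆ SP ×ˢ SH ×ˢ SL) :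
    ∑ x : ZMod q, (#(T.filter fun t => (t.1 : ZMod q) * t.2.1 * (t.2.2 : ZMod q)⁻¹ = x) : ℝ) ^ 2
      ≤ #(SP ×ˢ SH ×ˢ SL) * (2 * Real.log q) ^ 2 := by
  set S := SP ×ˢ SH ×ˢ SL
  let f : ℕ × ℕ × ℕ → ZMod q := fun t => (t.1 : ZMod q) * t.2.1 * (t.2.2 : ZMod q)⁻¹
  let g : ℕ × ℕ × ℕ → ℕ := fun t => t.2.2 * t.2.1 * t.1
  have hprod : ∀ {p h l}, p ∈ SP → h ∈ SH → l ∈ SL → l * h * p ≠ 0 ∧ l * h * p < q :=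
    fun hp hh hl =>
      ⟨by positivity [(hSP _ hp).pos, hSH _ hh, (hSL _ hl).pos], hsize _ hp _ hh _ hl⟩
  have hcross : (T ×ˢ T).filter (fun tt => f tt.1 = f tt.2) ⊆
      (S ×ˢ S).filter
        fun tt => g (tt.1.1, tt.1.2.1, tt.2.2.2) = g (tt.2.1, tt.2.2.1, tt.1.2.2) := by
    rintro ⟨⟨p₁, h₁, l₁⟩, p₂, h₂, l₂⟩ htt
    obtain ⟨⟨ht₁, ht₂⟩, heq⟩ := mem_filter.1 htt |>.imp_left mem_product.1
    have hm₁ := hT ht₁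
    have hm₂ := hT ht₂
    simp only [S, mem_filter, mem_product] at hm₁ hm₂ ⊢
    obtain ⟨hp₁, hh₁, hl₁⟩ := hm₁
    obtain ⟨hp₂, hh₂, hl₂⟩ := hm₂
    refine ⟨⟨⟨hp₁, hh₁, hl₁⟩, hp₂, hh₂, hl₂⟩, ?_⟩
    exact (natCast_mul_mul_inv_eq_iff_of_lt (hprod hp₁ hh₁ hl₂).1 (hprod hp₂ hh₂ hl₁).1
      (hprod hp₁ hh₁ hl₂).2 (hprod hp₂ hh₂ hl₁).2).1 heq
  have hfiber : ∀ u ∈ S, (#(S.filter fun v => g u = g v) : ℝ) ≤ (2 * Real.log q) ^ 2 := by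
    rintro ⟨p, h, l⟩ hu
    simp only [S, mem_product] at hu
    obtain ⟨hN, hNq⟩ := hprod hu.1 hu.2.1 hu.2.2
    have hS : ∀ t ∈ S, t.1.Prime ∧ t.2.2.Prime := fun t ht =>
      ⟨hSP _ (mem_product.1 ht).1, hSL _ (mem_product.1 (mem_product.1 ht).2).2⟩
    calc (#(S.filter fun v => l * h * p = v.2.2 * v.2.1 * v.1) : ℝ)
        ≤ #(l * h * p).primeFactors ^ 2 := by
          exact_mod_cast card_filter_mul_eq_le_card_primeFactors_sq S hS hN
      _ ≤ (2 * Real.log (l * h * p : ℕ)) ^ 2 :=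
          pow_le_pow_left₀ (Nat.cast_nonneg _) (card_primeFactors_le_two_mul_log _) 2
      _ ≤ (2 * Real.log q) ^ 2 := by gcongr
  calc _ = (#((T ×ˢ T).filter fun tt => f tt.1 = f tt.2) : ℝ) := by
        rw [← sum_sq_card_filter_eq_card_filter_prod T f, Nat.cast_sum]
        simp only [Nat.cast_pow, f]
    _ ≤ #((S ×ˢ S).filter
          fun tt => g (tt.1.1, tt.1.2.1, tt.2.2.2) = g (tt.2.1, tt.2.2.1, tt.1.2.2)) := by
        exact_mod_cast card_le_card hcross
    _ = #((S ×ˢ S).filter fun uv => g uv.1 = g uv.2) := by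
        rw [card_filter_swap_thirds]
    _ ≤ #S * (2 * Real.log q) ^ 2 := card_filter_prod_eq_le_card_mul S g hfiber

lemma mul_mul_lt_of_lt_two_mul {l h p q : ℕ} {L H P : ℝ} (hl : (l : ℝ) < 2 * L)
    (hh : (h : ℝ) ≤ 2 * H) (hp : (p : ℝ) < 2 * P) (hq : 2 * L * (2 * H) * (2 * P) < q) :
    l * h * p < q := by
  have hL : 0 ≤ 2 * L := (Nat.cast_nonneg l).trans hl.le
  have hH : 0 ≤ 2 * H := (Nat.cast_nonneg h).trans hh
  have : ((l * h * p : ℕ) : ℝ) ≤ 2 * L * (2 * H) * (2 * P) := by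
    push_cast
    gcongr
  exact_mod_cast this.trans_lt hq

lemma card_product_Icc_product_le {SP SL : Finset ℕ} {P H L : ℝ} (hP : 1 ≤ P) (hH : 0 ≤ H)
    (hL : 1 ≤ L) (hSP : ∀ p ∈ SP, (p : ℝ) < 2 * P) (hSL : ∀ l ∈ SL, (l : ℝ) < 2 * L) :
    (#(SP ×ˢ Icc 1 ⌊2 * H⌋₊ ×ˢ SL) : ℝ) ≤ 18 * (P * H * L) := by
  have hP' := card_lt_add_one_of_forall_lt SP (by linarith) hSP
  have hL' := card_lt_add_one_of_forall_lt SL (by linarith) hSL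
  have hH' : (#(Icc 1 ⌊2 * H⌋₊) : ℝ) ≤ 2 * H := by
    rw [Nat.card_Icc, Nat.add_sub_cancel]
    exact Nat.floor_le (by linarith)
  calc (#(SP ×ˢ Icc 1 ⌊2 * H⌋₊ ×ˢ SL) : ℝ) = #SP * (#(Icc 1 ⌊2 * H⌋₊) * #SL) := by
        rw [card_product, card_product]
        push_cast
        ring
    _ ≤ 3 * P * (2 * H * (3 * L)) := by gcongr <;> linarith
    _ = 18 * (P * H * L) := by ring

/-- With `ν(x)` counting triples `(p,h,l)` with `p` prime in `[P,2P)`,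
`l` prime in `[L,2L)`, `h ∈ (H, 2H]` coprime to `l` and `p h l̄ ≡ x (mod q)`, one has
`∑_x ν(x)² ≪_ε q^ε P H L`; moreover the underlying congruence between triples is
equivalent to an integer equation, and for fixed `(p₁,h₁,l₂)` the number of solutions
`(p₂,h₂,l₁)` of `l₁ h₂ p₂ = l₂ h₁ p₁` is at most `d₃(l₂ h₁ p₁)`. -/
theorem stmt17 :
    ∀ ε : ℝ, 0 < ε → ∃ C : ℝ, 0 < C ∧
      ∀ (q : ℕ) [Fact q.Prime] (P H L : ℝ), 1 ≤ P → 1 ≤ H → 1 ≤ L →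
        8 * (2 * P) * (2 * H) * (2 * L) < (q : ℝ) →
        ∀ (SP SL : Finset ℕ),
          (∀ p ∈ SP, p.Prime ∧ P ≤ (p : ℝ) ∧ (p : ℝ) < 2 * P) →
          (∀ l ∈ SL, l.Prime ∧ L ≤ (l : ℝ) ∧ (l : ℝ) < 2 * L) →
          Disjoint SP SL →
          ∀ ν : ZMod q → ℕ,
            (∀ x : ZMod q, ν x =
              ((SP ×ˢ (Finset.Icc 1 ⌊2 * H⌋₊ ×ˢ SL)).filter
                (fun t => H < (t.2.1 : ℝ) ∧ Nat.Coprime t.2.1 t.2.2 ∧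
                  (t.1 : ZMod q) * (t.2.1 : ZMod q) * (t.2.2 : ZMod q)⁻¹ = x)).card) →
            -- the second-moment bound
            ((∑ x : ZMod q, ((ν x : ℝ)) ^ 2) ≤ C * (q : ℝ) ^ ε * (P * H * L)) ∧
            -- the congruence is equivalent to an integer equation
            (∀ p₁ ∈ SP, ∀ p₂ ∈ SP, ∀ l₁ ∈ SL, ∀ l₂ ∈ SL, ∀ h₁ h₂ : ℕ,
              H < (h₁ : ℝ) → (h₁ : ℝ) ≤ 2 * H → H < (h₂ : ℝ) → (h₂ : ℝ) ≤ 2 * H →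
              (((p₁ * h₁ : ZMod q) * (l₁ : ZMod q)⁻¹ =
                  (p₂ * h₂ : ZMod q) * (l₂ : ZMod q)⁻¹) ↔
                l₂ * h₁ * p₁ = l₁ * h₂ * p₂)) ∧
            -- divisor-function bound for the number of solutions
            (∀ p₁ ∈ SP, ∀ l₂ ∈ SL, ∀ h₁ : ℕ, 0 < h₁ →
              ((SP ×ˢ (Finset.Icc 1 ⌊2 * H⌋₊ ×ˢ SL)).filter
                (fun t => l₂ * h₁ * p₁ = t.2.2 * t.2.1 * t.1)).card ≤
                d3 (l₂ * h₁ * p₁)) := by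
  intro ε hε
  refine ⟨288 / ε ^ 2, by positivity, ?_⟩
  intro q _ P H L hP hH hL hq SP SL hSP hSL _ ν hν
  have hq' : 2 * L * (2 * H) * (2 * P) < q := by
    have := mul_pos (mul_pos (by linarith : (0 : ℝ) < 2 * L) (by linarith : (0 : ℝ) < 2 * H))
      (by linarith : (0 : ℝ) < 2 * P)
    linarith
  have hsize : ∀ p ∈ SP, ∀ h : ℕ, (h : ℝ) ≤ 2 * H → ∀ l ∈ SL, l * h * p < q :=
    fun p hp h hh l hl => mul_mul_lt_of_lt_two_mul (hSL l hl).2.2 hh (hSP p hp).2.2 hq'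
  have hne : ∀ p ∈ SP, ∀ h : ℕ, 0 < h → ∀ l ∈ SL, l * h * p ≠ 0 := fun p hp h hh l hl =>
    (Nat.mul_pos (Nat.mul_pos (hSL l hl).1.pos hh) (hSP p hp).1.pos).ne'
  have hH₀ : ∀ h : ℕ, H < h → 0 < h := fun h hh => by exact_mod_cast (by linarith : (0 : ℝ) < h)
  refine ⟨?_, fun p₁ hp₁ p₂ hp₂ l₁ hl₁ l₂ hl₂ h₁ h₂ hh₁ hh₁' hh₂ hh₂' =>
    natCast_mul_mul_inv_eq_iff_of_lt (hne p₁ hp₁ h₁ (hH₀ h₁ hh₁) l₂ hl₂)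
      (hne p₂ hp₂ h₂ (hH₀ h₂ hh₂) l₁ hl₁) (hsize p₁ hp₁ h₁ hh₁' l₂ hl₂)
      (hsize p₂ hp₂ h₂ hh₂' l₁ hl₁),
    fun p₁ hp₁ l₂ hl₂ h₁ hh₁ => card_filter_mul_eq_le_d3 _ (hne p₁ hp₁ h₁ hh₁ l₂ hl₂)⟩
  have hSH : ∀ h ∈ Icc 1 ⌊2 * H⌋₊, 0 < h ∧ (h : ℝ) ≤ 2 * H := fun h hh =>
    ⟨(mem_Icc.1 hh).1, (Nat.cast_le.2 (mem_Icc.1 hh).2).trans (Nat.floor_le (by linarith))⟩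
  simp_rw [hν, ← and_assoc, ← filter_filter]
  calc _ ≤ #(SP ×ˢ Icc 1 ⌊2 * H⌋₊ ×ˢ SL) * (2 * Real.log q) ^ 2 :=
        sum_sq_card_filter_mul_mul_inv_eq_le (fun p hp => (hSP p hp).1) (fun h hh => (hSH h hh).1)
          (fun l hl => (hSL l hl).1) (fun p hp h hh l hl => hsize p hp h (hSH h hh).2 l hl)
          ((filter_subset _ _).trans (filter_subset _ _))
    _ ≤ 18 * (P * H * L) * (4 * (4 / ε ^ 2 * q ^ ε)) := by
        rw [mul_pow]
        gcongr
        · exact card_product_Icc_product_le hP (by linarith) hL (fun p hp => (hSP p hp).2.2)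
            fun l hl => (hSL l hl).2.2
        · norm_num
        · exact log_sq_le_four_div_sq_mul_rpow
            (by exact_mod_cast (Fact.out : q.Prime).one_lt.le) hε
    _ = 288 / ε ^ 2 * q ^ ε * (P * H * L) := by ring
end
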